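/- arXiv:1808.10585 — 4 statements merged into one kernel-verified Lean document; each statement's English description precedes it below -/
import Mathlib

section
/- Let p_+ and p_- be probability measures on a measurable space X, and let π, θ, θ' ∈ [0,1] with θ ≠ θ'. Set p_tr = θ·p_+ + (1-θ)·p_- and p_tr' = θ'·p_+ + (1-θ')·p_-. Define a = (1-θ')π/(θ-θ'), b = -θ'(1-π)/(θ-θ'), c = θ(1-π)/(θ-θ'), d = -(1-θ)π/(θ-θ'). Then for any bounded measurable functions f, h : X → ℝ (playing the roles of ℓ(g(·)) and ℓ(-g(·))), we have π·E_{p_+}[f] + (1-π)·E_{p_-}[h] = E_{p_tr}[a·f + b·h] + E_{p_tr'}[c·h + d·f]. -/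
open MeasureTheory


lemma fin_smul {X : Type*} [MeasurableSpace X] (μ : Measure X) [IsFiniteMeasure μ] (s : ℝ) :
    IsFiniteMeasure (ENNReal.ofReal s • μ) := by
  constructor
  rw [Measure.smul_apply, smul_eq_mul]
  exact ENNReal.mul_lt_top ENNReal.ofReal_lt_top (measure_lt_top μ _)

lemma int_of_bdd {X : Type*} [MeasurableSpace X] (μ : Measure X) [IsFiniteMeasure μ]
    {f : X → ℝ} (hf : Measurable f) (hb : ∃ C, ∀ x, |f x| ≤ C) : Integrable f μ := by
  obtain ⟨C, hC⟩ := hb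
  exact (integrable_const C).mono' hf.aestronglyMeasurable (Filter.Eventually.of_forall
    fun x => by simpa using hC x)

lemma combo_integral {X : Type*} [MeasurableSpace X]
    (pP pN : Measure X) [IsProbabilityMeasure pP] [IsProbabilityMeasure pN]
    {s t : ℝ} (hs : 0 ≤ s) (ht : 0 ≤ t)
    {f h : X → ℝ} (hf : Measurable f) (hh : Measurable h)
    (hfb : ∃ C, ∀ x, |f x| ≤ C) (hhb : ∃ C, ∀ x, |h x| ≤ C) (a b : ℝ) :
    (∫ x, (a * f x + b * h x) ∂(ENNReal.ofReal s • pP + ENNReal.ofReal t • pN)) =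
      s * (a * ∫ x, f x ∂pP + b * ∫ x, h x ∂pP)
        + t * (a * ∫ x, f x ∂pN + b * ∫ x, h x ∂pN) := by
  haveI := fin_smul pP s
  haveI := fin_smul pN t
  have hg : Measurable fun x => a * f x + b * h x := (hf.const_mul a).add (hh.const_mul b)
  have hgb : ∃ C, ∀ x, |a * f x + b * h x| ≤ C := by
    obtain ⟨C, hC⟩ := hfb; obtain ⟨D, hD⟩ := hhb
    refine ⟨|a| * C + |b| * D, fun x => (abs_add_le _ _).trans ?_⟩
    rw [abs_mul, abs_mul]
    nlinarith [hC x, hD x, abs_nonneg a, abs_nonneg b, abs_nonneg (f x), abs_nonneg (h x)]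
  rw [integral_add_measure (int_of_bdd _ hg hgb) (int_of_bdd _ hg hgb),
    integral_smul_measure, integral_smul_measure, ENNReal.toReal_ofReal hs,
    ENNReal.toReal_ofReal ht,
    integral_add ((int_of_bdd pP hf hfb).const_mul a) ((int_of_bdd pP hh hhb).const_mul b),
    integral_add ((int_of_bdd pN hf hfb).const_mul a) ((int_of_bdd pN hh hhb).const_mul b),
    integral_const_mul, integral_const_mul, integral_const_mul, integral_const_mul]
  simp [smul_eq_mul]

/-- Theorem 2 (possibility of risk rewrite from two sets of unlabeled data):
the risk `π·E_{pP}[f] + (1-π)·E_{pN}[h]` equals the corrected expression over the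
two unlabeled marginals `p_tr = θ·pP + (1-θ)·pN` and `p_tr' = θ'·pP + (1-θ')·pN`. -/
theorem stmt2 {X : Type*} [MeasurableSpace X]
    (pP pN : Measure X) [IsProbabilityMeasure pP] [IsProbabilityMeasure pN]
    (π θ θ' : ℝ) (hπ : π ∈ Set.Icc (0:ℝ) 1)
    (hθ : θ ∈ Set.Icc (0:ℝ) 1) (hθ' : θ' ∈ Set.Icc (0:ℝ) 1) (hne : θ ≠ θ')
    (f h : X → ℝ) (hf : Measurable f) (hh : Measurable h)
    (hfb : ∃ C, ∀ x, |f x| ≤ C) (hhb : ∃ C, ∀ x, |h x| ≤ C) :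
    π * ∫ x, f x ∂pP + (1 - π) * ∫ x, h x ∂pN =
      (∫ x, (((1 - θ') * π / (θ - θ')) * f x + (-(θ' * (1 - π)) / (θ - θ')) * h x)
        ∂(ENNReal.ofReal θ • pP + ENNReal.ofReal (1 - θ) • pN)) +
      (∫ x, ((θ * (1 - π) / (θ - θ')) * h x + (-((1 - θ) * π) / (θ - θ')) * f x)
        ∂(ENNReal.ofReal θ' • pP + ENNReal.ofReal (1 - θ') • pN)) := by
  rw [combo_integral pP pN hθ.1 (by linarith [hθ.2]) hf hh hfb hhb,
    combo_integral pP pN hθ'.1 (by linarith [hθ'.2]) hh hf hhb hfb]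
  have hd : θ - θ' ≠ 0 := sub_ne_zero.mpr hne
  field_simp
  ring
end

section
/- Suppose the loss ℓ : ℝ → ℝ satisfies the symmetric condition ℓ(z) + ℓ(-z) = 1 for all z. Then the UU-rewritten risk a·E_{p_tr}[ℓ(g)] + b·E_{p_tr}[ℓ(-g)] + c·E_{p_tr'}[ℓ(-g)] + d·E_{p_tr'}[ℓ(g)], with a = (1-θ')π/(θ-θ'), b = -θ'(1-π)/(θ-θ'), c = θ(1-π)/(θ-θ'), d = -(1-θ)π/(θ-θ'), equals α·E_{p_tr}[ℓ(g)] + α'·E_{p_tr'}[ℓ(-g)] - (θ'(1-π)+(1-θ)π)/(θ-θ'), where α = (θ'+π-2θ'π)/(θ-θ') and α' = (θ+π-2θπ)/(θ-θ'). -/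
open MeasureTheory

/-- Simplification of the UU-rewritten risk under a symmetric loss `ℓ(z) + ℓ(-z) = 1`:
it equals a cost-sensitive form with weights `α, α'` minus a constant. -/
theorem stmt4 {X : Type*} [MeasurableSpace X]
    (μ μ' : Measure X) [IsProbabilityMeasure μ] [IsProbabilityMeasure μ']
    (ℓ : ℝ → ℝ) (hsym : ∀ z, ℓ z + ℓ (-z) = 1)
    (g : X → ℝ)
    (h1 : Integrable (fun x => ℓ (g x)) μ) (h2 : Integrable (fun x => ℓ (-g x)) μ)
    (h3 : Integrable (fun x => ℓ (g x)) μ') (h4 : Integrable (fun x => ℓ (-g x)) μ')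
    (π θ θ' : ℝ) (hlt : θ' < θ) :
    ((1 - θ') * π / (θ - θ')) * ∫ x, ℓ (g x) ∂μ
      + (-(θ' * (1 - π)) / (θ - θ')) * ∫ x, ℓ (-g x) ∂μ
      + (θ * (1 - π) / (θ - θ')) * ∫ x, ℓ (-g x) ∂μ'
      + (-((1 - θ) * π) / (θ - θ')) * ∫ x, ℓ (g x) ∂μ' =
    ((θ' + π - 2 * θ' * π) / (θ - θ')) * ∫ x, ℓ (g x) ∂μ
      + ((θ + π - 2 * θ * π) / (θ - θ')) * ∫ x, ℓ (-g x) ∂μ'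
      - (θ' * (1 - π) + (1 - θ) * π) / (θ - θ') := by
  have hμ : (∫ x, ℓ (g x) ∂μ) + (∫ x, ℓ (-g x) ∂μ) = 1 := by
    rw [← integral_add h1 h2]
    simp [hsym]
  have hμ' : (∫ x, ℓ (g x) ∂μ') + (∫ x, ℓ (-g x) ∂μ') = 1 := by
    rw [← integral_add h3 h4]
    simp [hsym]
  have hne : θ - θ' ≠ 0 := sub_ne_zero.mpr hlt.ne'
  have e2 : (∫ x, ℓ (-g x) ∂μ) = 1 - ∫ x, ℓ (g x) ∂μ := by linarith
  have e3 : (∫ x, ℓ (g x) ∂μ') = 1 - ∫ x, ℓ (-g x) ∂μ' := by linarith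
  rw [e2, e3]
  field_simp
  ring
end

section
/- Let X_1,...,X_n be i.i.d. samples from p_tr and X'_1,...,X'_{n'} i.i.d. samples from p_tr' (independent of each other), where p_tr = θ·p_+ + (1-θ)·p_- and p_tr' = θ'·p_+ + (1-θ')·p_- with θ > θ'. Define the empirical risk R̂_UU(g) = (1/n)Σ_i [a·ℓ(g(X_i)) + b·ℓ(-g(X_i))] + (1/n')Σ_j [d·ℓ(g(X'_j)) + c·ℓ(-g(X'_j))] with a = (1-θ')π/(θ-θ'), b = -θ'(1-π)/(θ-θ'), c = θ(1-π)/(θ-θ'), d = -(1-θ)π/(θ-θ'). Then for any fixed measurable g with ℓ(±g(·)) integrable, E[R̂_UU(g)] = R(g) := π·E_{p_+}[ℓ(g(X))] + (1-π)·E_{p_-}[ℓ(-g(X))]. -/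
/-!
Each empirical mean is unbiased for the expectation under its sample's law, and these laws are
the mixtures `θ pP + (1 - θ) pN` and `θ' pP + (1 - θ') pN`. Hence the expected empirical risk is a
linear combination of the four integrals of `ℓ ∘ g` and `ℓ ∘ (-g)` against `pP` and `pN`, and the
estimator's coefficients solve the linear system that makes this combination equal to
`π E_{pP}[ℓ ∘ g] + (1 - π) E_{pN}[ℓ ∘ (-g)]`; this is where `θ ≠ θ'` enters.
-/

open MeasureTheory

section Mixture

variable {X : Type*} [MeasurableSpace X] {μ ν : Measure X} {θ : ℝ} {h : X → ℝ}

theorem integrable_mixture (hμ : Integrable h μ) (hν : Integrable h ν) :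
    Integrable h (ENNReal.ofReal θ • μ + ENNReal.ofReal (1 - θ) • ν) :=
  (hμ.smul_measure ENNReal.ofReal_ne_top).add_measure (hν.smul_measure ENNReal.ofReal_ne_top)

theorem integral_mixture (hθ : θ ∈ Set.Icc (0 : ℝ) 1) (hμ : Integrable h μ)
    (hν : Integrable h ν) :
    ∫ x, h x ∂(ENNReal.ofReal θ • μ + ENNReal.ofReal (1 - θ) • ν)
      = θ * ∫ x, h x ∂μ + (1 - θ) * ∫ x, h x ∂ν := by
  rw [integral_add_measure (hμ.smul_measure ENNReal.ofReal_ne_top)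
      (hν.smul_measure ENNReal.ofReal_ne_top), integral_smul_measure, integral_smul_measure,
    ENNReal.toReal_ofReal hθ.1, ENNReal.toReal_ofReal (sub_nonneg.2 hθ.2), smul_eq_mul,
    smul_eq_mul]

end Mixture

section EmpiricalMean

variable {Ω X : Type*} [MeasurableSpace Ω] [MeasurableSpace X] {P : Measure Ω} {μ : Measure X}
  {n : ℕ} {Xs : Fin n → Ω → X} {f : X → ℝ}

theorem integrable_comp_of_map_eq {T : Ω → X} (hT : Measurable T) (hlaw : Measure.map T P = μ)
    (hf : Integrable f μ) : Integrable (fun ω ↦ f (T ω)) P :=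
  (hlaw ▸ hf).comp_measurable hT

theorem integrable_empiricalMean (hXm : ∀ i, Measurable (Xs i))
    (hlaw : ∀ i, Measure.map (Xs i) P = μ) (hf : Integrable f μ) :
    Integrable (fun ω ↦ (n : ℝ)⁻¹ * ∑ i, f (Xs i ω)) P :=
  (integrable_finsetSum _ fun i _ ↦ integrable_comp_of_map_eq (hXm i) (hlaw i) hf).const_mul _

theorem integral_empiricalMean (hn : 0 < n) (hXm : ∀ i, Measurable (Xs i))
    (hlaw : ∀ i, Measure.map (Xs i) P = μ) (hf : Integrable f μ) :
    ∫ ω, (n : ℝ)⁻¹ * ∑ i, f (Xs i ω) ∂P = ∫ x, f x ∂μ := by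
  have hcomp : ∀ i, ∫ ω, f (Xs i ω) ∂P = ∫ x, f x ∂μ := fun i ↦ by
    rw [← hlaw i] at hf ⊢
    exact (integral_map (hXm i).aemeasurable hf.aestronglyMeasurable).symm
  rw [integral_const_mul,
    integral_finsetSum _ fun i _ ↦ integrable_comp_of_map_eq (hXm i) (hlaw i) hf]
  simp only [hcomp, Finset.sum_const, Finset.card_univ, Fintype.card_fin, nsmul_eq_mul]
  field_simp

theorem integral_add_empiricalMean {μ' : Measure X} {n' : ℕ} {Xs' : Fin n' → Ω → X}
    {f' : X → ℝ} (hn : 0 < n) (hn' : 0 < n') (hXm : ∀ i, Measurable (Xs i))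
    (hXm' : ∀ j, Measurable (Xs' j)) (hlaw : ∀ i, Measure.map (Xs i) P = μ)
    (hlaw' : ∀ j, Measure.map (Xs' j) P = μ') (hf : Integrable f μ) (hf' : Integrable f' μ') :
    ∫ ω, ((n : ℝ)⁻¹ * ∑ i, f (Xs i ω) + (n' : ℝ)⁻¹ * ∑ j, f' (Xs' j ω)) ∂P
      = ∫ x, f x ∂μ + ∫ x, f' x ∂μ' := by
  rw [integral_add (integrable_empiricalMean hXm hlaw hf)
      (integrable_empiricalMean hXm' hlaw' hf'),
    integral_empiricalMean hn hXm hlaw hf, integral_empiricalMean hn' hXm' hlaw' hf']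

end EmpiricalMean

theorem integral_const_mul_add_const_mul {X : Type*} [MeasurableSpace X] {μ : Measure X}
    {u v : X → ℝ} (hu : Integrable u μ) (hv : Integrable v μ) (a b : ℝ) :
    ∫ x, a * u x + b * v x ∂μ = a * ∫ x, u x ∂μ + b * ∫ x, v x ∂μ := by
  rw [integral_add (hu.const_mul a) (hv.const_mul b), integral_const_mul, integral_const_mul]

theorem stmt7_general {Ω X : Type*} [MeasurableSpace Ω] [MeasurableSpace X]
    (P : Measure Ω) [IsProbabilityMeasure P]
    (pP pN : Measure X) [IsProbabilityMeasure pP] [IsProbabilityMeasure pN]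
    (π θ θ' : ℝ)
    (hθ : θ ∈ Set.Icc (0:ℝ) 1) (hθ' : θ' ∈ Set.Icc (0:ℝ) 1) (hlt : θ' < θ)
    (n n' : ℕ) (hn : 0 < n) (hn' : 0 < n')
    (Xs : Fin n → Ω → X) (Xs' : Fin n' → Ω → X)
    (hXm : ∀ i, Measurable (Xs i)) (hXm' : ∀ j, Measurable (Xs' j))
    (hlaw : ∀ i, Measure.map (Xs i) P = ENNReal.ofReal θ • pP + ENNReal.ofReal (1 - θ) • pN)
    (hlaw' : ∀ j, Measure.map (Xs' j) P = ENNReal.ofReal θ' • pP + ENNReal.ofReal (1 - θ') • pN)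
    (g : X → ℝ) (hg : Measurable g)
    (ℓ : ℝ → ℝ) (hℓ : Measurable ℓ) (hb : ∃ C, ∀ z, |ℓ z| ≤ C) :
    (∫ ω, ((n : ℝ)⁻¹ * ∑ i, (((1 - θ') * π / (θ - θ')) * ℓ (g (Xs i ω))
              + (-(θ' * (1 - π)) / (θ - θ')) * ℓ (-g (Xs i ω)))
        + (n' : ℝ)⁻¹ * ∑ j, ((-((1 - θ) * π) / (θ - θ')) * ℓ (g (Xs' j ω))
              + (θ * (1 - π) / (θ - θ')) * ℓ (-g (Xs' j ω)))) ∂P) =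
    π * ∫ x, ℓ (g x) ∂pP + (1 - π) * ∫ x, ℓ (-g x) ∂pN := by
  obtain ⟨C, hC⟩ := hb
  have hu : ∀ (μ : Measure X) [IsFiniteMeasure μ], Integrable (fun x ↦ ℓ (g x)) μ := fun μ _ ↦
    .of_bound (hℓ.comp hg).aestronglyMeasurable C (ae_of_all _ fun _ ↦ hC _)
  have hv : ∀ (μ : Measure X) [IsFiniteMeasure μ], Integrable (fun x ↦ ℓ (-g x)) μ := fun μ _ ↦
    .of_bound (hℓ.comp hg.neg).aestronglyMeasurable C (ae_of_all _ fun _ ↦ hC _)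
  have hF : ∀ (μ : Measure X) [IsFiniteMeasure μ] (a b : ℝ),
      Integrable (fun x ↦ a * ℓ (g x) + b * ℓ (-g x)) μ := fun μ _ a b ↦
    ((hu μ).const_mul a).add ((hv μ).const_mul b)
  rw [integral_add_empiricalMean hn hn' hXm hXm' hlaw hlaw'
      (integrable_mixture (hF pP _ _) (hF pN _ _)) (integrable_mixture (hF pP _ _) (hF pN _ _)),
    integral_mixture hθ (hF pP _ _) (hF pN _ _), integral_mixture hθ' (hF pP _ _) (hF pN _ _)]
  simp only [integral_const_mul_add_const_mul (hu pP) (hv pP),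
    integral_const_mul_add_const_mul (hu pN) (hv pN)]
  have hne : θ - θ' ≠ 0 := sub_ne_zero.2 hlt.ne'
  field_simp
  ring

/-- Unbiasedness of the UU empirical risk estimator: if `X₁,…,Xₙ` have law
`p_tr = θ·pP + (1-θ)·pN` and `X'₁,…,X'ₙ'` have law `p_tr' = θ'·pP + (1-θ')·pN`
(θ > θ'), then the expectation of the UU empirical risk equals the true risk
`R(g) = π·E_{pP}[ℓ(g)] + (1-π)·E_{pN}[ℓ(-g)]`. -/
theorem stmt7 {Ω X : Type*} [MeasurableSpace Ω] [MeasurableSpace X]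
    (P : Measure Ω) [IsProbabilityMeasure P]
    (pP pN : Measure X) [IsProbabilityMeasure pP] [IsProbabilityMeasure pN]
    (π θ θ' : ℝ) (hπ : π ∈ Set.Icc (0:ℝ) 1)
    (hθ : θ ∈ Set.Icc (0:ℝ) 1) (hθ' : θ' ∈ Set.Icc (0:ℝ) 1) (hlt : θ' < θ)
    (n n' : ℕ) (hn : 0 < n) (hn' : 0 < n')
    (Xs : Fin n → Ω → X) (Xs' : Fin n' → Ω → X)
    (hXm : ∀ i, Measurable (Xs i)) (hXm' : ∀ j, Measurable (Xs' j))
    (hlaw : ∀ i, Measure.map (Xs i) P = ENNReal.ofReal θ • pP + ENNReal.ofReal (1 - θ) • pN)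
    (hlaw' : ∀ j, Measure.map (Xs' j) P = ENNReal.ofReal θ' • pP + ENNReal.ofReal (1 - θ') • pN)
    (g : X → ℝ) (hg : Measurable g)
    (ℓ : ℝ → ℝ) (hℓ : Measurable ℓ) (hb : ∃ C, ∀ z, |ℓ z| ≤ C) :
    (∫ ω, ((n : ℝ)⁻¹ * ∑ i, (((1 - θ') * π / (θ - θ')) * ℓ (g (Xs i ω))
              + (-(θ' * (1 - π)) / (θ - θ')) * ℓ (-g (Xs i ω)))
        + (n' : ℝ)⁻¹ * ∑ j, ((-((1 - θ) * π) / (θ - θ')) * ℓ (g (Xs' j ω))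
              + (θ * (1 - π) / (θ - θ')) * ℓ (-g (Xs' j ω)))) ∂P) =
    π * ∫ x, ℓ (g x) ∂pP + (1 - π) * ∫ x, ℓ (-g x) ∂pN :=
  stmt7_general P pP pN π θ θ' hθ hθ' hlt n n' hn hn' Xs Xs' hXm hXm' hlaw hlaw' g hg ℓ hℓ hb
end

section
/- Let ℓ be a bounded loss satisfying 0 ≤ ℓ(+∞) < ℓ(-∞) < +∞ (limits at ±∞), where ℓ(+∞) = lim_{z→+∞} ℓ(z) and ℓ(-∞) = lim_{z→-∞} ℓ(z). Suppose p_+ and p_- are almost surely separable (there is a measurable set A with p_+(A) = 1 and p_-(A) = 0), π ∈ (0,1), and p_tr = θ·p_+ + (1-θ)·p_- for some θ ∈ [0,1]. Then there do not exist constants a, b, θ such that for every measurable g : X → [-∞,+∞], π·E_{p_+}[ℓ(g)] + (1-π)·E_{p_-}[ℓ(-g)] = E_{p_tr}[a·ℓ(g) + b·ℓ(-g)]. -/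
/-!
Test the claimed identity on three classifiers that are a.e. constant on each class:
`g ≡ +∞`, `g ≡ -∞`, and `g = +∞` on `A`, `-∞` off `A`. Writing `L₊ = ℓ(+∞) < L₋ = ℓ(-∞)`,
the two constant classifiers give two independent linear equations forcing `a = π` and
`b = 1 - π`. The separating classifier then demands `L₊ = c·L₊ + (1 - c)·L₋` with
`c = θπ + (1 - θ)(1 - π)`, i.e. `c = 1`, which no `θ ∈ [0,1]` achieves when `0 < π < 1`.
-/

open MeasureTheory Filter

section Mixture

variable {X : Type*} [MeasurableSpace X] (pP pN : Measure X)
  [IsProbabilityMeasure pP] [IsProbabilityMeasure pN]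

theorem integral_mixture_of_ae_eq_const {θ : ℝ} (hθ0 : 0 ≤ θ) (hθ1 : θ ≤ 1) {f : X → ℝ}
    {cP cN : ℝ} (hP : f =ᵐ[pP] fun _ => cP) (hN : f =ᵐ[pN] fun _ => cN) :
    ∫ x, f x ∂(ENNReal.ofReal θ • pP + ENNReal.ofReal (1 - θ) • pN) =
      θ * cP + (1 - θ) * cN := by
  have hfP : Integrable f pP := (integrable_const cP).congr hP.symm
  have hfN : Integrable f pN := (integrable_const cN).congr hN.symm
  rw [integral_add_measure (hfP.smul_measure ENNReal.ofReal_ne_top)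
      (hfN.smul_measure ENNReal.ofReal_ne_top),
    integral_smul_measure, integral_smul_measure, integral_congr_ae hP, integral_congr_ae hN]
  simp [ENNReal.toReal_ofReal hθ0, ENNReal.toReal_ofReal (sub_nonneg.2 hθ1)]

theorem risk_eq_of_ae_eq_const (ℓ : EReal → ℝ) {π a b θ : ℝ} (hθ0 : 0 ≤ θ) (hθ1 : θ ≤ 1)
    {g : X → EReal} {u v : EReal} (hP : g =ᵐ[pP] fun _ => u) (hN : g =ᵐ[pN] fun _ => v)
    (h : π * ∫ x, ℓ (g x) ∂pP + (1 - π) * ∫ x, ℓ (-g x) ∂pN =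
      ∫ x, (a * ℓ (g x) + b * ℓ (-g x))
        ∂(ENNReal.ofReal θ • pP + ENNReal.ofReal (1 - θ) • pN)) :
    π * ℓ u + (1 - π) * ℓ (-v) =
      θ * (a * ℓ u + b * ℓ (-u)) + (1 - θ) * (a * ℓ v + b * ℓ (-v)) := by
  have hPℓ : (fun x => ℓ (g x)) =ᵐ[pP] fun _ => ℓ u := hP.fun_comp ℓ
  have hNℓ : (fun x => ℓ (-g x)) =ᵐ[pN] fun _ => ℓ (-v) := hN.fun_comp (ℓ ∘ Neg.neg)
  have hPrisk : (fun x => a * ℓ (g x) + b * ℓ (-g x)) =ᵐ[pP] fun _ => a * ℓ u + b * ℓ (-u) :=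
    hP.fun_comp fun z => a * ℓ z + b * ℓ (-z)
  have hNrisk : (fun x => a * ℓ (g x) + b * ℓ (-g x)) =ᵐ[pN] fun _ => a * ℓ v + b * ℓ (-v) :=
    hN.fun_comp fun z => a * ℓ z + b * ℓ (-z)
  rwa [integral_mixture_of_ae_eq_const pP pN hθ0 hθ1 hPrisk hNrisk, integral_congr_ae hPℓ,
    integral_congr_ae hNℓ, integral_const, integral_const, probReal_univ, probReal_univ,
    one_smul, one_smul] at h

end Mixture

theorem coeffs_eq_of_constant_classifiers {Ltop Lbot π a b : ℝ} (hLtop : 0 ≤ Ltop)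
    (hL : Ltop < Lbot)
    (htop : π * Ltop + (1 - π) * Lbot = a * Ltop + b * Lbot)
    (hbot : π * Lbot + (1 - π) * Ltop = a * Lbot + b * Ltop) :
    a = π ∧ b = 1 - π := by
  have hsum : (a + b - 1) * (Ltop + Lbot) = 0 := by linear_combination -htop - hbot
  have hdiff : (a - b - (2 * π - 1)) * (Ltop - Lbot) = 0 := by linear_combination -htop + hbot
  have hab : a + b = 1 := by
    linarith [(mul_eq_zero.1 hsum).resolve_right (by linarith)]
  have hab' : a - b = 2 * π - 1 := by
    linarith [(mul_eq_zero.1 hdiff).resolve_right (by linarith)]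
  constructor <;> linarith

theorem separating_classifier_contradiction {Ltop Lbot π θ : ℝ} (hL : Ltop < Lbot) (hπ0 : 0 < π)
    (hπ1 : π < 1) (hθ0 : 0 ≤ θ) (hθ1 : θ ≤ 1)
    (hsep : π * Ltop + (1 - π) * Ltop =
      θ * (π * Ltop + (1 - π) * Lbot) + (1 - θ) * (π * Lbot + (1 - π) * Ltop)) :
    False := by
  have hmix : 0 < θ * (1 - π) + (1 - θ) * π := by
    rcases hθ1.lt_or_eq with hθ1 | rfl
    · nlinarith [mul_nonneg hθ0 (sub_nonneg.2 hπ1.le)]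
    · linarith
  nlinarith [mul_pos hmix (sub_pos.2 hL)]

theorem stmt16_general {X : Type*} [MeasurableSpace X]
    (pP pN : Measure X) [IsProbabilityMeasure pP] [IsProbabilityMeasure pN]
    (ℓ : EReal → ℝ)
    (hlim : 0 ≤ ℓ ⊤ ∧ ℓ ⊤ < ℓ ⊥)
    (A : Set X) (hA : MeasurableSet A) (hAP : pP A = 1) (hAN : pN A = 0)
    (π : ℝ) (hπ0 : 0 < π) (hπ1 : π < 1) :
    ¬ ∃ (a b θ : ℝ), 0 ≤ θ ∧ θ ≤ 1 ∧
      ∀ g : X → EReal, Measurable g →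
        π * ∫ x, ℓ (g x) ∂pP + (1 - π) * ∫ x, ℓ (-g x) ∂pN =
          ∫ x, (a * ℓ (g x) + b * ℓ (-g x))
            ∂(ENNReal.ofReal θ • pP + ENNReal.ofReal (1 - θ) • pN) := by
  classical
  rintro ⟨a, b, θ, hθ0, hθ1, hrisk⟩
  have htop := risk_eq_of_ae_eq_const pP pN ℓ hθ0 hθ1 (ae_eq_refl _) (ae_eq_refl _)
    (hrisk (fun _ => ⊤) measurable_const)
  have hbot := risk_eq_of_ae_eq_const pP pN ℓ hθ0 hθ1 (ae_eq_refl _) (ae_eq_refl _)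
    (hrisk (fun _ => ⊥) measurable_const)
  have hinA : ∀ᵐ x ∂pP, x ∈ A := by
    rw [ae_mem_iff_measure_eq hA.nullMeasurableSet, hAP, measure_univ]
  have hnotinA : ∀ᵐ x ∂pN, x ∉ A := measure_eq_zero_iff_ae_notMem.1 hAN
  have hsep := risk_eq_of_ae_eq_const pP pN ℓ hθ0 hθ1
    (g := fun x => if x ∈ A then ⊤ else ⊥) (u := ⊤) (v := ⊥)
    (hinA.mono fun x hx => if_pos hx) (hnotinA.mono fun x hx => if_neg hx)
    (hrisk _ (measurable_const.ite hA measurable_const))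
  simp only [EReal.neg_top, EReal.neg_bot] at htop hbot hsep
  obtain ⟨rfl, rfl⟩ := coeffs_eq_of_constant_classifiers (π := π) (a := a) (b := b) hlim.1
    hlim.2 (by linear_combination htop) (by linear_combination hbot)
  exact separating_classifier_contradiction hlim.2 hπ0 hπ1 hθ0 hθ1 hsep

/-- Theorem 1 (impossibility of risk rewrite from one set of unlabeled data):
for a bounded loss `ℓ` on the extended reals with `0 ≤ ℓ(+∞) < ℓ(-∞) < ∞`, if the
class-conditionals `pP` and `pN` are almost surely separable and `π ∈ (0,1)`, then
there are no constants `a, b` and class prior `θ ∈ [0,1]` such that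
`π·E_{pP}[ℓ(g)] + (1-π)·E_{pN}[ℓ(-g)] = E_{p_tr}[a·ℓ(g) + b·ℓ(-g)]` for every
measurable `g : X → [-∞,+∞]`, where `p_tr = θ·pP + (1-θ)·pN`. -/
theorem stmt16 {X : Type*} [MeasurableSpace X]
    (pP pN : Measure X) [IsProbabilityMeasure pP] [IsProbabilityMeasure pN]
    (ℓ : EReal → ℝ) (hmeas : Measurable ℓ)
    (hbdd : ∃ C : ℝ, ∀ z, |ℓ z| ≤ C)
    (hlim : 0 ≤ ℓ ⊤ ∧ ℓ ⊤ < ℓ ⊥)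
    (A : Set X) (hA : MeasurableSet A) (hAP : pP A = 1) (hAN : pN A = 0)
    (π : ℝ) (hπ0 : 0 < π) (hπ1 : π < 1) :
    ¬ ∃ (a b θ : ℝ), 0 ≤ θ ∧ θ ≤ 1 ∧
      ∀ g : X → EReal, Measurable g →
        π * ∫ x, ℓ (g x) ∂pP + (1 - π) * ∫ x, ℓ (-g x) ∂pN =
          ∫ x, (a * ℓ (g x) + b * ℓ (-g x))
            ∂(ENNReal.ofReal θ • pP + ENNReal.ofReal (1 - θ) • pN) :=
  stmt16_general pP pN ℓ hlim A hA hAP hAN π hπ0 hπ1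
end
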